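/- (Theorem 1) Let D ≥ 1, n ≥ 2, fix g ∈ ℝ^D and ỹ ∈ ℝ^D, and let X ∈ ℝ^{D×n} have all rows non-constant. Define the first-order Taylor loss term Loss^grad(X) = Σ_{i=1}^n (y^{(i)} − ỹ)ᵀ g, where y^{(i)} is the i-th column of the row-wise standardization Y(X). Then the Fréchet derivative of Loss^grad with respect to X vanishes at X: ∂Loss^grad/∂X = 0. In particular, the first derivatives g of the loss at the expansion point ỹ cannot pass their influence through the batch-normalization standardization phase. -/

import Mathlib

/-! Every row of the standardization has batch mean zero, so summing over the samples cancels the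
standardized part entirely: `Loss^grad(Z) = -n ỹᵀg` for every `Z`, a constant function. -/

open scoped BigOperators

/-- Mini-batch mean of a feature dimension across `n` samples. -/
noncomputable def bmean {n : ℕ} (x : Fin n → ℝ) : ℝ := (∑ i, x i) / n

/-- Mini-batch standard deviation of a feature dimension across `n` samples. -/
noncomputable def bstd {n : ℕ} (x : Fin n → ℝ) : ℝ :=
  Real.sqrt ((∑ i, (x i - bmean x) ^ 2) / n)

/-- `x` is non-constant: it differs from the constant vector of its mean. -/
def NonConstant {n : ℕ} (x : Fin n → ℝ) : Prop := x ≠ fun _ => bmean x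

/-- The batch-normalization standardization phase (with ε = 0). -/
noncomputable def standardize {n : ℕ} (x : Fin n → ℝ) : Fin n → ℝ :=
  fun i => (x i - bmean x) / bstd x

lemma sum_sub_bmean {n : ℕ} (x : Fin n → ℝ) : ∑ i, (x i - bmean x) = 0 := by
  rcases Nat.eq_zero_or_pos n with rfl | hpos
  · simp
  · have hn : (n : ℝ) ≠ 0 := by positivity
    simp only [Finset.sum_sub_distrib, bmean, Finset.sum_const, Finset.card_univ,
      Fintype.card_fin, nsmul_eq_mul]
    field_simp
    ring

lemma sum_standardize {n : ℕ} (x : Fin n → ℝ) : ∑ i, standardize x i = 0 := by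
  simp only [standardize, ← Finset.sum_div, sum_sub_bmean, zero_div]

lemma sum_sum_standardize_sub_mul {D n : ℕ} (g ytil : Fin D → ℝ) (Z : Fin D → Fin n → ℝ) :
    ∑ i, ∑ d, (standardize (Z d) i - ytil d) * g d = -n * ∑ d, ytil d * g d := by
  rw [Finset.sum_comm, Finset.mul_sum]
  refine Finset.sum_congr rfl fun d _ => ?_
  simp only [← Finset.sum_mul, Finset.sum_sub_distrib, sum_standardize, Finset.sum_const,
    Finset.card_univ, Fintype.card_fin, nsmul_eq_mul]
  ring

theorem loss_grad_fderiv_zero_general (D n : ℕ)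
    (g ytil : Fin D → ℝ) (X : Fin D → Fin n → ℝ) :
    HasFDerivAt
      (fun Z : Fin D → Fin n → ℝ => ∑ i, ∑ d, (standardize (Z d) i - ytil d) * g d)
      (0 : (Fin D → Fin n → ℝ) →L[ℝ] ℝ) X := by
  simp only [sum_sum_standardize_sub_mul]
  exact hasFDerivAt_const _ _

/-- Theorem 1: the first-order Taylor loss term
`Loss^grad(X) = Σᵢ (y⁽ⁱ⁾ − ỹ)ᵀ g` (where `y⁽ⁱ⁾` is the `i`-th column of the row-wise
standardization of `X`) has vanishing Fréchet derivative with respect to `X`. -/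
theorem loss_grad_fderiv_zero (D n : ℕ) (hD : 1 ≤ D) (hn : 2 ≤ n)
    (g ytil : Fin D → ℝ) (X : Fin D → Fin n → ℝ) (hX : ∀ d, NonConstant (X d)) :
    HasFDerivAt
      (fun Z : Fin D → Fin n → ℝ => ∑ i, ∑ d, (standardize (Z d) i - ytil d) * g d)
      (0 : (Fin D → Fin n → ℝ) →L[ℝ] ℝ) X :=
  loss_grad_fderiv_zero_general D n g ytil X
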